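/- arXiv:0705.4389 — 5 statements merged into one kernel-verified Lean document; each statement's English description precedes it below -/
import Mathlib

section
/- Let K be a field of characteristic 2, and let V ⊂ K^5 be the zero set of the toric ideal I of the parametrization x_1 = u_1^4, x_2 = u_2^4, x_3 = u_3^4, y_1 = u_1^8u_3, y_2 = u_2^{12}u_3^3. Then V equals the common zero set of the two binomials F_1 = y_1^4 − x_1^8x_3 and F_2 = y_2^4 − x_2^{12}x_3^3 in K^5; i.e., V is a set-theoretic complete intersection on F_1, F_2. -/
lemma pow4_inj {K : Type*} [Field K] [CharP K 2] {a b : K} (h : a ^ 4 = b ^ 4) :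
    a = b := by
  have h4 : (4 : ℕ) = 2 ^ 2 := rfl
  have : (a - b) ^ (2 ^ 2 : ℕ) = a ^ (2 ^ 2 : ℕ) - b ^ (2 ^ 2 : ℕ) :=
    sub_pow_char_pow (p := 2) (n := 2) a b
  rw [← h4, h, sub_self] at this
  have := pow_eq_zero_iff (n := 4) (by norm_num) |>.mp this
  linear_combination this

/-- Over an algebraically closed field of characteristic 2, the toric variety
V = {(u₁⁴, u₂⁴, u₃⁴, u₁⁸u₃, u₂¹²u₃³)} ⊂ K⁵ is the common zero set of
F₁ = y₁⁴ − x₁⁸x₃ and F₂ = y₂⁴ − x₂¹²x₃³. -/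
theorem stmt_7 (K : Type*) [Field K] [IsAlgClosed K] [CharP K 2] :
    {v : K × K × K × K × K | ∃ u1 u2 u3 : K,
        v = (u1 ^ 4, u2 ^ 4, u3 ^ 4, u1 ^ 8 * u3, u2 ^ 12 * u3 ^ 3)} =
    {v : K × K × K × K × K |
        v.2.2.2.1 ^ 4 - v.1 ^ 8 * v.2.2.1 = 0 ∧
        v.2.2.2.2 ^ 4 - v.2.1 ^ 12 * v.2.2.1 ^ 3 = 0} := by
  ext ⟨x1, x2, x3, y1, y2⟩
  simp only [Set.mem_setOf_eq]
  constructor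
  · rintro ⟨u1, u2, u3, h⟩
    obtain ⟨h1, h2, h3, h4, h5⟩ := Prod.mk.injEq .. ▸ h
    simp_all
    constructor <;> ring
  · rintro ⟨h1, h2⟩
    obtain ⟨u1, hu1⟩ := IsAlgClosed.exists_pow_nat_eq x1 (n := 4) (by norm_num)
    obtain ⟨u2, hu2⟩ := IsAlgClosed.exists_pow_nat_eq x2 (n := 4) (by norm_num)
    obtain ⟨u3, hu3⟩ := IsAlgClosed.exists_pow_nat_eq x3 (n := 4) (by norm_num)
    refine ⟨u1, u2, u3, ?_⟩
    have e1 : y1 = u1 ^ 8 * u3 := by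
      apply pow4_inj
      rw [sub_eq_zero] at h1
      rw [h1, ← hu1, ← hu3]; ring
    have e2 : y2 = u2 ^ 12 * u3 ^ 3 := by
      apply pow4_inj
      rw [sub_eq_zero] at h2
      rw [h2, ← hu2, ← hu3]; ring
    simp [hu1, hu2, hu3, e1, e2]
end

section
/- Let d ≥ 1 and a_1,...,a_n, b_1,...,b_n be nonnegative integers, and suppose d divides both a_i and b_i for a fixed index i. If a binomial B ∈ K[x_1,...,x_n,y_1,y_2] lies in the toric ideal I(V) of the parametrization x_k = u_k^d (k=1..n), y_1 = ∏_k u_k^{a_k}, y_2 = ∏_k u_k^{b_k}, then the polynomial obtained from B by substituting x_i = 1 lies in the toric ideal I(V̄) of the parametrization obtained by omitting the parameter u_i. Conversely, every binomial of I(V̄) arises this way from a binomial of I(V). -/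
/-!
Setting `u_i = 1` commutes with the parametrizations: `ψ ∘ bar = ρ ∘ φ`, where `ρ` substitutes
`u_i = 1`, so `bar` maps all of `I(V)` into `I(V̄)`. Conversely, a binomial `x^α - x^β` lies in
`I(V̄)` iff `α` and `β` have the same image exponent vector. Lift `α`, `β` by giving `x_i` exponents
`c_α`, `c_β`; the `u_i`-exponents of the images become `d c_α + a_i α_{y₁} + b_i α_{y₂}` and its
analogue for `β`, and since `d ∣ a_i, b_i` the choice `c_α = (a_i β_{y₁} + b_i β_{y₂}) / d`
(and symmetrically for `c_β`) makes them equal.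
-/

open MvPolynomial Finsupp

noncomputable section

variable {R ι κ : Type*} [CommRing R]

theorem prod_X_pow_eq_monomial_equivFunOnFinite [Fintype ι] (c : ι → ℕ) :
    ∏ k, (X k : MvPolynomial ι R) ^ c k = monomial (equivFunOnFinite.symm c) 1 := by
  rw [monomial_eq, C_1, one_mul, Finsupp.prod_fintype _ _ fun _ => pow_zero _]
  rfl

section Toric

variable [Fintype ι] (d : ℕ) (a b : ι → ℕ)

def toricMap : MvPolynomial (ι ⊕ Fin 2) R →ₐ[R] MvPolynomial ι R :=
  aeval (Sum.elim (fun k => X k ^ d) fun j => if j = 0 then ∏ k, X k ^ a k else ∏ k, X k ^ b k)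

def toricExponent (γ : (ι ⊕ Fin 2) →₀ ℕ) (k : ι) : ℕ :=
  d * γ (.inl k) + a k * γ (.inr 0) + b k * γ (.inr 1)

theorem toricMap_monomial (γ : (ι ⊕ Fin 2) →₀ ℕ) :
    toricMap d a b (monomial γ (1 : R)) = ∏ k, X k ^ toricExponent d a b γ k := by
  rw [toricMap, aeval_monomial, map_one, one_mul, Finsupp.prod_fintype _ _ fun _ => pow_zero _,
    Fintype.prod_sum_type, Fin.prod_univ_two]
  simp only [Sum.elim_inl, Sum.elim_inr, if_pos, one_ne_zero, if_false, ← Finset.prod_pow,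
    ← pow_mul]
  rw [← Finset.prod_mul_distrib, ← Finset.prod_mul_distrib]
  simp only [← pow_add, toricExponent, add_assoc]

theorem monomial_sub_monomial_mem_ker_toricMap_iff [Nontrivial R] (α β : (ι ⊕ Fin 2) →₀ ℕ) :
    monomial α (1 : R) - monomial β 1 ∈ RingHom.ker (toricMap (R := R) d a b).toRingHom ↔
      toricExponent d a b α = toricExponent d a b β := by
  rw [RingHom.mem_ker, AlgHom.toRingHom_eq_coe, RingHom.coe_coe, map_sub, sub_eq_zero,
    toricMap_monomial, toricMap_monomial, prod_X_pow_eq_monomial_equivFunOnFinite,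
    prod_X_pow_eq_monomial_equivFunOnFinite, monomial_left_inj one_ne_zero,
    equivFunOnFinite.symm.injective.eq_iff]

end Toric

section Lift

variable (i : ι) (c : ℕ) (α : ({k // k ≠ i} ⊕ κ) →₀ ℕ)

def liftExponent : (ι ⊕ κ) →₀ ℕ :=
  mapDomain (Sum.map Subtype.val id) α + single (.inl i) c

theorem liftExponent_inl_self : liftExponent i c α (.inl i) = c := by
  simp [liftExponent, mapDomain_of_notMem_range]

theorem liftExponent_map_val (s : {k // k ≠ i} ⊕ κ) :
    liftExponent i c α (Sum.map Subtype.val id s) = α s := by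
  have hinj : Function.Injective (Sum.map (Subtype.val : {k // k ≠ i} → ι) (id : κ → κ)) :=
    Sum.map_injective.2 ⟨Subtype.val_injective, Function.injective_id⟩
  rw [liftExponent, Finsupp.add_apply, mapDomain_apply hinj, single_eq_of_ne ?_, add_zero]
  rcases s with k | j
  · simpa using k.2
  · simp

theorem liftExponent_inl_of_ne {k : ι} (h : k ≠ i) :
    liftExponent i c α (.inl k) = α (.inl ⟨k, h⟩) :=
  liftExponent_map_val i c α (.inl ⟨k, h⟩)

theorem liftExponent_inr (j : κ) : liftExponent i c α (.inr j) = α (.inr j) :=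
  liftExponent_map_val i c α (.inr j)

end Lift

section Substitution

variable [DecidableEq ι] (i : ι)

def substOne : MvPolynomial ι R →ₐ[R] MvPolynomial {k // k ≠ i} R :=
  aeval fun k => if h : k = i then 1 else X ⟨k, h⟩

def substOneInl : MvPolynomial (ι ⊕ κ) R →ₐ[R] MvPolynomial ({k // k ≠ i} ⊕ κ) R :=
  aeval (Sum.elim (fun k => if h : k = i then 1 else X (.inl ⟨k, h⟩)) fun j => X (.inr j))

theorem substOne_prod_X_pow [Fintype ι] (c : ι → ℕ) :
    substOne (R := R) i (∏ k, X k ^ c k) = ∏ k : {k // k ≠ i}, X k ^ c k := by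
  simp only [map_prod, map_pow, substOne, aeval_X]
  rw [Fintype.prod_eq_mul_prod_subtype_ne _ i, dif_pos rfl, one_pow, one_mul]
  exact Finset.prod_congr rfl fun k _ => by rw [dif_neg k.2]

theorem toricMap_comp_substOneInl [Fintype ι] (d : ℕ) (a b : ι → ℕ) :
    (toricMap d (fun k : {k // k ≠ i} => a k) fun k => b k).comp (substOneInl i) =
      (substOne i).comp (toricMap (R := R) d a b) := by
  refine algHom_ext fun s => ?_
  rcases s with k | j
  · by_cases h : k = i
    · subst h
      simp [substOneInl, toricMap, substOne]
    · simp [substOneInl, toricMap, substOne, h]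
  · simp only [AlgHom.comp_apply, substOneInl, toricMap, aeval_X, Sum.elim_inr]
    split_ifs <;> rw [substOne_prod_X_pow]

theorem substOneInl_comp_rename :
    (substOneInl (R := R) (κ := κ) i).comp (rename (Sum.map Subtype.val id)) = AlgHom.id R _ :=
  algHom_ext fun s => by
    rcases s with k | j
    · simp [substOneInl, k.2]
    · simp [substOneInl]

theorem substOneInl_monomial_liftExponent (c : ℕ) (α : ({k // k ≠ i} ⊕ κ) →₀ ℕ) :
    substOneInl i (monomial (liftExponent i c α) (1 : R)) = monomial α 1 := by
  have h : monomial (liftExponent i c α) (1 : R) =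
      rename (Sum.map Subtype.val id) (monomial α 1) * X (.inl i) ^ c := by
    rw [rename_monomial, X_pow_eq_monomial, monomial_mul, one_mul, liftExponent]
  rw [h, map_mul, ← AlgHom.comp_apply, substOneInl_comp_rename]
  simp [substOneInl]

end Substitution

theorem exists_toricExponent_liftExponent_eq [Fintype ι] [DecidableEq ι] {d : ℕ} {a b : ι → ℕ}
    {i : ι} (hai : d ∣ a i) (hbi : d ∣ b i) {α β : ({k // k ≠ i} ⊕ Fin 2) →₀ ℕ}
    (h : toricExponent d (fun k : {k // k ≠ i} => a k) (fun k => b k) α =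
      toricExponent d (fun k : {k // k ≠ i} => a k) (fun k => b k) β) :
    ∃ cα cβ,
      toricExponent d a b (liftExponent i cα α) = toricExponent d a b (liftExponent i cβ β) := by
  obtain ⟨a', ha'⟩ := hai
  obtain ⟨b', hb'⟩ := hbi
  refine ⟨a' * β (.inr 0) + b' * β (.inr 1), a' * α (.inr 0) + b' * α (.inr 1), funext fun k => ?_⟩
  simp only [toricExponent, liftExponent_inr]
  by_cases hk : k = i
  · subst hk
    rw [liftExponent_inl_self, liftExponent_inl_self, ha', hb']
    ring
  · rw [liftExponent_inl_of_ne i _ _ hk, liftExponent_inl_of_ne i _ _ hk]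
    exact congr_fun h ⟨k, hk⟩

end

open MvPolynomial in
theorem stmt_8_general (K : Type*) [Field K] (n d : ℕ) (a b : Fin n → ℕ)
    (i : Fin n) (hai : d ∣ a i) (hbi : d ∣ b i)
    (φ : MvPolynomial (Fin n ⊕ Fin 2) K →ₐ[K] MvPolynomial (Fin n) K)
    (hφ : φ = aeval (Sum.elim (fun k => X k ^ d)
      (fun j => if j = 0 then ∏ k, X k ^ a k else ∏ k, X k ^ b k)))
    (ψ : MvPolynomial ({k : Fin n // k ≠ i} ⊕ Fin 2) K →ₐ[K]
        MvPolynomial {k : Fin n // k ≠ i} K)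
    (hψ : ψ = aeval (Sum.elim (fun k => X k ^ d)
      (fun j => if j = 0 then ∏ k : {k : Fin n // k ≠ i}, X k ^ a k.1
                else ∏ k : {k : Fin n // k ≠ i}, X k ^ b k.1)))
    (bar : MvPolynomial (Fin n ⊕ Fin 2) K →ₐ[K]
        MvPolynomial ({k : Fin n // k ≠ i} ⊕ Fin 2) K)
    (hbar : bar = aeval (Sum.elim
      (fun k => if h : k = i then 1 else X (Sum.inl ⟨k, h⟩))
      (fun j => X (Sum.inr j)))) :
    (∀ F : MvPolynomial (Fin n ⊕ Fin 2) K,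
        (∃ α β, F = monomial α 1 - monomial β 1) →
        F ∈ RingHom.ker φ.toRingHom → bar F ∈ RingHom.ker ψ.toRingHom) ∧
    (∀ G : MvPolynomial ({k : Fin n // k ≠ i} ⊕ Fin 2) K,
        (∃ α β, G = monomial α 1 - monomial β 1) →
        G ∈ RingHom.ker ψ.toRingHom →
        ∃ F : MvPolynomial (Fin n ⊕ Fin 2) K,
          (∃ α β, F = monomial α 1 - monomial β 1) ∧
          F ∈ RingHom.ker φ.toRingHom ∧ bar F = G) := by
  obtain rfl : φ = toricMap d a b := hφ
  obtain rfl : ψ = toricMap d (fun k : {k // k ≠ i} => a k) fun k => b k := hψ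
  obtain rfl : bar = substOneInl i := hbar
  refine ⟨fun F _ hF => ?_, ?_⟩
  · rw [RingHom.mem_ker, AlgHom.toRingHom_eq_coe, RingHom.coe_coe] at hF ⊢
    rw [← AlgHom.comp_apply, toricMap_comp_substOneInl, AlgHom.comp_apply, hF, map_zero]
  · rintro G ⟨α, β, rfl⟩ hG
    rw [monomial_sub_monomial_mem_ker_toricMap_iff] at hG
    obtain ⟨cα, cβ, h⟩ := exists_toricExponent_liftExponent_eq hai hbi hG
    refine ⟨_, ⟨_, _, rfl⟩, (monomial_sub_monomial_mem_ker_toricMap_iff d a b _ _).2 h, ?_⟩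
    rw [map_sub, substOneInl_monomial_liftExponent, substOneInl_monomial_liftExponent]

open MvPolynomial in
/-- If d divides a_i and b_i, then the substitution x_i = 1 sends binomials of the toric
ideal I(V) of x_k = u_k^d, y₁ = ∏ u_k^{a_k}, y₂ = ∏ u_k^{b_k} to binomials of the toric
ideal I(V̄) of the parametrization with the parameter u_i omitted, and conversely every
binomial of I(V̄) arises this way from a binomial of I(V).
Indices: Sum.inl k is the variable x_k, Sum.inr 0 = y₁, Sum.inr 1 = y₂. -/
theorem stmt_8 (K : Type*) [Field K] (n d : ℕ) (hd : 0 < d) (a b : Fin n → ℕ)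
    (i : Fin n) (hai : d ∣ a i) (hbi : d ∣ b i)
    (φ : MvPolynomial (Fin n ⊕ Fin 2) K →ₐ[K] MvPolynomial (Fin n) K)
    (hφ : φ = aeval (Sum.elim (fun k => X k ^ d)
      (fun j => if j = 0 then ∏ k, X k ^ a k else ∏ k, X k ^ b k)))
    (ψ : MvPolynomial ({k : Fin n // k ≠ i} ⊕ Fin 2) K →ₐ[K]
        MvPolynomial {k : Fin n // k ≠ i} K)
    (hψ : ψ = aeval (Sum.elim (fun k => X k ^ d)
      (fun j => if j = 0 then ∏ k : {k : Fin n // k ≠ i}, X k ^ a k.1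
                else ∏ k : {k : Fin n // k ≠ i}, X k ^ b k.1)))
    (bar : MvPolynomial (Fin n ⊕ Fin 2) K →ₐ[K]
        MvPolynomial ({k : Fin n // k ≠ i} ⊕ Fin 2) K)
    (hbar : bar = aeval (Sum.elim
      (fun k => if h : k = i then 1 else X (Sum.inl ⟨k, h⟩))
      (fun j => X (Sum.inr j)))) :
    (∀ F : MvPolynomial (Fin n ⊕ Fin 2) K,
        (∃ α β, F = monomial α 1 - monomial β 1) →
        F ∈ RingHom.ker φ.toRingHom → bar F ∈ RingHom.ker ψ.toRingHom) ∧
    (∀ G : MvPolynomial ({k : Fin n // k ≠ i} ⊕ Fin 2) K,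
        (∃ α β, G = monomial α 1 - monomial β 1) →
        G ∈ RingHom.ker ψ.toRingHom →
        ∃ F : MvPolynomial (Fin n ⊕ Fin 2) K,
          (∃ α β, F = monomial α 1 - monomial β 1) ∧
          F ∈ RingHom.ker φ.toRingHom ∧ bar F = G) :=
  stmt_8_general K n d a b i hai hbi φ hφ ψ hψ bar hbar
end

section
/- With the notation of the previous lemma (d dividing a_i and b_i), if I(V) = Rad(F_1,...,F_s) in K[x_1,...,x_n,y_1,y_2], then I(V̄) = Rad(F̄_1,...,F̄_s) in K[x_1,...,x_{i-1},x_{i+1},...,x_n,y_1,y_2], where F̄_j is obtained from F_j by substituting x_i = 1. -/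
open MvPolynomial

namespace Stmt9Aux

variable {K : Type*} [Field K] {n : ℕ}

/-- Embedding of the smaller variable set into the larger one. -/
def emb (i : Fin n) : ({k : Fin n // k ≠ i} ⊕ Fin 2) → (Fin n ⊕ Fin 2) :=
  Sum.map Subtype.val id

lemma emb_inj (i : Fin n) : Function.Injective (emb (n := n) i) :=
  Sum.map_injective.mpr ⟨Subtype.val_injective, Function.injective_id⟩

lemma prod_split {S : Type*} [CommMonoid S] (i : Fin n) (t : Fin n → S) :
    ∏ k, t k = t i * ∏ w : {k : Fin n // k ≠ i}, t w.1 := by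
  rw [Fintype.prod_eq_mul_prod_compl i t]
  congr 1
  exact Finset.prod_subtype _ (fun x => by simp) _

lemma prod_dite_eq {S : Type*} [CommMonoid S] (i : Fin n)
    (u : {k : Fin n // k ≠ i} → S) (c : Fin n → ℕ) :
    ∏ x : Fin n, (if h : x = i then 1 else u ⟨x, h⟩) ^ c x
      = ∏ w : {k : Fin n // k ≠ i}, u w ^ c w.1 := by
  rw [prod_split i fun x => (if h : x = i then 1 else u ⟨x, h⟩) ^ c x]
  have h1 : (if h : i = i then (1 : S) else u ⟨i, h⟩) = 1 := dif_pos rfl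
  rw [h1, one_pow, one_mul]
  exact Finset.prod_congr rfl fun w _ => by rw [dif_neg w.2]

lemma aeval_monomial_emb {S : Type*} [CommSemiring S] [Algebra K S] {i : Fin n}
    (f : (Fin n ⊕ Fin 2) → S) (m : ({k : Fin n // k ≠ i} ⊕ Fin 2) →₀ ℕ) (e : ℕ) (c : K) :
    aeval f (monomial (Finsupp.mapDomain (emb i) m + Finsupp.single (Sum.inl i) e) c)
      = algebraMap K S c * f (Sum.inl i) ^ e * ∏ w, f (emb i w) ^ m w := by
  rw [aeval_monomial,
    Finsupp.prod_add_index' (h := fun v e => f v ^ e) (fun a => pow_zero _)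
      (fun a b₁ b₂ => pow_add _ _ _),
    Finsupp.prod_single_index (h := fun v e => f v ^ e) (pow_zero _),
    Finsupp.prod_mapDomain_index_inj (h := fun v e => f v ^ e) (emb_inj i),
    Finsupp.prod_pow]
  ring

lemma aeval_monomial_fin {S : Type*} [CommSemiring S] [Algebra K S]
    {σ : Type*} [Fintype σ] (g : σ → S) (m : σ →₀ ℕ) (c : K) :
    aeval g (monomial m c) = algebraMap K S c * ∏ w, g w ^ m w := by
  rw [aeval_monomial, Finsupp.prod_pow]

lemma prod_X_pow_univ {σ : Type*} [Fintype σ] [DecidableEq σ] (m : σ →₀ ℕ) :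
    ∏ w, (X w : MvPolynomial σ K) ^ m w = monomial m 1 := by
  rw [← prod_X_pow_eq_monomial]
  exact (Finset.prod_subset (Finset.subset_univ _) (fun x _ hx => by
    rw [Finsupp.notMem_support_iff.mp hx, pow_zero])).symm

/-- The key lifting: every polynomial in the kernel of `ψ` is `bar` of a polynomial
in the kernel of `φ`. -/
lemma key {i : Fin n} (d : ℕ) (hd : 0 < d) (a b : Fin n → ℕ)
    (hai : d ∣ a i) (hbi : d ∣ b i)
    (G : MvPolynomial ({k : Fin n // k ≠ i} ⊕ Fin 2) K)
    (hG : aeval (Sum.elim (fun k : {k : Fin n // k ≠ i} =>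
        (X k : MvPolynomial {k : Fin n // k ≠ i} K) ^ d)
      (fun j : Fin 2 => if j = 0 then ∏ k : {k : Fin n // k ≠ i}, X k ^ a k.1
                else ∏ k : {k : Fin n // k ≠ i}, X k ^ b k.1)) G = 0) :
    ∃ H : MvPolynomial (Fin n ⊕ Fin 2) K,
      aeval (Sum.elim (fun k => (X k : MvPolynomial (Fin n) K) ^ d)
        (fun j : Fin 2 => if j = 0 then ∏ k, X k ^ a k else ∏ k, X k ^ b k)) H = 0 ∧
      aeval (Sum.elim (fun k : Fin n => if h : k = i then 1 else X (Sum.inl ⟨k, h⟩))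
        (fun j : Fin 2 => X (Sum.inr j))) H = G := by
  classical
  set ψg : ({k : Fin n // k ≠ i} ⊕ Fin 2) → MvPolynomial {k : Fin n // k ≠ i} K :=
    Sum.elim (fun k : {k : Fin n // k ≠ i} => X k ^ d)
      (fun j : Fin 2 => if j = 0 then ∏ k : {k : Fin n // k ≠ i}, X k ^ a k.1
                else ∏ k : {k : Fin n // k ≠ i}, X k ^ b k.1) with hψg
  set φg : (Fin n ⊕ Fin 2) → MvPolynomial (Fin n) K :=
    Sum.elim (fun k => X k ^ d)
      (fun j : Fin 2 => if j = 0 then ∏ k, X k ^ a k else ∏ k, X k ^ b k) with hφg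
  set barg : (Fin n ⊕ Fin 2) → MvPolynomial ({k : Fin n // k ≠ i} ⊕ Fin 2) K :=
    Sum.elim (fun k : Fin n => if h : k = i then 1 else X (Sum.inl ⟨k, h⟩))
      (fun j : Fin 2 => X (Sum.inr j)) with hbarg
  obtain ⟨qa, hqa⟩ := hai
  obtain ⟨qb, hqb⟩ := hbi
  set wt : (({k : Fin n // k ≠ i} ⊕ Fin 2) →₀ ℕ) → ℕ :=
    fun m => m (Sum.inr 0) * qa + m (Sum.inr 1) * qb with hwt
  set N := G.support.sup wt with hN
  refine ⟨∑ m ∈ G.support, monomial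
    (Finsupp.mapDomain (emb i) m + Finsupp.single (Sum.inl i) (N - wt m)) (coeff m G),
    ?_, ?_⟩
  · -- φ of the lift is zero
    have hterm : ∀ m ∈ G.support,
        aeval φg (monomial
          (Finsupp.mapDomain (emb i) m + Finsupp.single (Sum.inl i) (N - wt m)) (coeff m G))
        = X i ^ (d * N) * rename Subtype.val (aeval ψg (monomial m (coeff m G))) := by
      intro m hm
      have hginl : φg (Sum.inl i) = X i ^ d := rfl
      have hg : ∀ w : {k : Fin n // k ≠ i} ⊕ Fin 2,
          φg (emb i w) = (Sum.elim (fun _ : {k : Fin n // k ≠ i} => (1 : MvPolynomial (Fin n) K))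
            (fun j : Fin 2 => if j = 0 then X i ^ a i else X i ^ b i) w)
            * rename Subtype.val (ψg w) := by
        rintro (w | j)
        · simp [hφg, hψg, emb, map_pow]
        · by_cases hj : j = 0
          · simp only [hφg, hψg, emb, Sum.map_inr, Sum.elim_inr, hj, if_true, id_eq,
              map_prod, map_pow, rename_X]
            rw [prod_split i fun k => (X k : MvPolynomial (Fin n) K) ^ a k]
          · simp only [hφg, hψg, emb, Sum.map_inr, Sum.elim_inr, if_neg hj, id_eq,
              map_prod, map_pow, rename_X]
            rw [prod_split i fun k => (X k : MvPolynomial (Fin n) K) ^ b k]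
      have hsplit : ∏ w, φg (emb i w) ^ m w
          = ((X i ^ a i) ^ m (Sum.inr 0) * (X i ^ b i) ^ m (Sum.inr 1))
            * ∏ w, (rename Subtype.val (ψg w)) ^ m w := by
        calc ∏ w, φg (emb i w) ^ m w
            = ∏ w, ((Sum.elim (fun _ : {k : Fin n // k ≠ i} => (1 : MvPolynomial (Fin n) K))
                (fun j : Fin 2 => if j = 0 then X i ^ a i else X i ^ b i) w) ^ m w
                * (rename Subtype.val (ψg w)) ^ m w) := by
              refine Finset.prod_congr rfl fun w _ => ?_
              rw [hg w, mul_pow]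
          _ = ((X i ^ a i) ^ m (Sum.inr 0) * (X i ^ b i) ^ m (Sum.inr 1))
                * ∏ w, (rename Subtype.val (ψg w)) ^ m w := by
              rw [Finset.prod_mul_distrib]
              congr 1
              rw [Fintype.prod_sum_type]
              simp [Fin.prod_univ_two]
      have hpow : (X i ^ d : MvPolynomial (Fin n) K) ^ (N - wt m)
          * ((X i ^ a i) ^ m (Sum.inr 0) * (X i ^ b i) ^ m (Sum.inr 1)) = X i ^ (d * N) := by
        rw [← pow_mul, ← pow_mul, ← pow_mul, ← pow_add, ← pow_add]
        congr 1
        have hle : wt m ≤ N := Finset.le_sup hm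
        calc d * (N - wt m) + (a i * m (Sum.inr 0) + b i * m (Sum.inr 1))
            = d * (N - wt m) + d * wt m := by rw [hqa, hqb, hwt]; ring
          _ = d * N := by rw [← Nat.mul_add, Nat.sub_add_cancel hle]
      have hR : rename (Subtype.val : {k : Fin n // k ≠ i} → Fin n)
            (aeval ψg (monomial m (coeff m G)))
          = C (coeff m G) * ∏ w, (rename Subtype.val (ψg w)) ^ m w := by
        rw [aeval_monomial_fin, map_mul, map_prod]
        simp only [map_pow, algebraMap_eq, rename_C]
      rw [aeval_monomial_emb, hR, hsplit, hginl, ← hpow]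
      simp only [algebraMap_eq]
      ring
    have hsum : ∑ m ∈ G.support, aeval φg (monomial
          (Finsupp.mapDomain (emb i) m + Finsupp.single (Sum.inl i) (N - wt m)) (coeff m G))
        = ∑ m ∈ G.support,
          X i ^ (d * N) * rename Subtype.val (aeval ψg (monomial m (coeff m G))) :=
      Finset.sum_congr rfl hterm
    rw [map_sum, hsum, ← Finset.mul_sum, ← map_sum, ← map_sum, support_sum_monomial_coeff, hG,
      map_zero, mul_zero]
  · -- bar of the lift is G
    have hbterm : ∀ m ∈ G.support,
        aeval barg (monomial
          (Finsupp.mapDomain (emb i) m + Finsupp.single (Sum.inl i) (N - wt m)) (coeff m G))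
        = monomial m (coeff m G) := by
      intro m hm
      have h1 : barg (Sum.inl i) = 1 := by simp [hbarg]
      have h2 : ∀ w : {k : Fin n // k ≠ i} ⊕ Fin 2, barg (emb i w) = X w := by
        rintro (w | j)
        · show (if h : (w : Fin n) = i then (1 : MvPolynomial ({k : Fin n // k ≠ i} ⊕ Fin 2) K)
            else X (Sum.inl ⟨w.1, h⟩)) = X (Sum.inl w)
          rw [dif_neg w.2]
        · rfl
      have h3 : ∏ w, barg (emb i w) ^ m w
          = ∏ w, (X w : MvPolynomial ({k : Fin n // k ≠ i} ⊕ Fin 2) K) ^ m w :=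
        Finset.prod_congr rfl fun w _ => by rw [h2 w]
      rw [aeval_monomial_emb, h1, one_pow, mul_one, h3, prod_X_pow_univ,
        algebraMap_eq, C_mul_monomial, mul_one]
    have hsum : ∑ m ∈ G.support, aeval barg (monomial
          (Finsupp.mapDomain (emb i) m + Finsupp.single (Sum.inl i) (N - wt m)) (coeff m G))
        = ∑ m ∈ G.support, monomial m (coeff m G) := Finset.sum_congr rfl hbterm
    rw [map_sum, hsum, support_sum_monomial_coeff]

end Stmt9Aux

open MvPolynomial in
/-- If d divides a_i and b_i and I(V) = Rad(F₁,...,F_s), then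
I(V̄) = Rad(F̄₁,...,F̄_s), where F̄_j is obtained from F_j by substituting x_i = 1
(and V̄ is the parametrization with the parameter u_i omitted). -/
theorem stmt_9 (K : Type*) [Field K] (n d : ℕ) (hd : 0 < d) (a b : Fin n → ℕ)
    (i : Fin n) (hai : d ∣ a i) (hbi : d ∣ b i)
    (φ : MvPolynomial (Fin n ⊕ Fin 2) K →ₐ[K] MvPolynomial (Fin n) K)
    (hφ : φ = aeval (Sum.elim (fun k => X k ^ d)
      (fun j => if j = 0 then ∏ k, X k ^ a k else ∏ k, X k ^ b k)))
    (ψ : MvPolynomial ({k : Fin n // k ≠ i} ⊕ Fin 2) K →ₐ[K]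
        MvPolynomial {k : Fin n // k ≠ i} K)
    (hψ : ψ = aeval (Sum.elim (fun k => X k ^ d)
      (fun j => if j = 0 then ∏ k : {k : Fin n // k ≠ i}, X k ^ a k.1
                else ∏ k : {k : Fin n // k ≠ i}, X k ^ b k.1)))
    (bar : MvPolynomial (Fin n ⊕ Fin 2) K →ₐ[K]
        MvPolynomial ({k : Fin n // k ≠ i} ⊕ Fin 2) K)
    (hbar : bar = aeval (Sum.elim
      (fun k => if h : k = i then 1 else X (Sum.inl ⟨k, h⟩))
      (fun j => X (Sum.inr j))))
    (s : ℕ) (F : Fin s → MvPolynomial (Fin n ⊕ Fin 2) K)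
    (hrad : RingHom.ker φ.toRingHom = (Ideal.span (Set.range F)).radical) :
    RingHom.ker ψ.toRingHom = (Ideal.span (Set.range fun j => bar (F j))).radical := by
  classical
  set β : MvPolynomial (Fin n) K →ₐ[K] MvPolynomial {k : Fin n // k ≠ i} K :=
    aeval (fun k : Fin n => if h : k = i then 1 else X ⟨k, h⟩) with hβ
  have hcomp : ψ.comp bar = β.comp φ := by
    apply algHom_ext
    rintro (k | j)
    · by_cases h : k = i
      · subst h
        simp [hφ, hψ, hbar, hβ, one_pow, map_one]
      · simp [hφ, hψ, hbar, hβ, h]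
    · by_cases hj : j = 0
      · simp only [hφ, hψ, hbar, hβ, AlgHom.comp_apply, aeval_X, Sum.elim_inr, hj, if_true,
          map_prod, map_pow]
        exact (Stmt9Aux.prod_dite_eq i (fun w => X w) a).symm
      · simp only [hφ, hψ, hbar, hβ, AlgHom.comp_apply, aeval_X, Sum.elim_inr, if_neg hj,
          map_prod, map_pow]
        exact (Stmt9Aux.prod_dite_eq i (fun w => X w) b).symm
  have hkerφ : ∀ j, φ (F j) = 0 := by
    intro j
    have : F j ∈ RingHom.ker φ.toRingHom := by
      rw [hrad]
      exact Ideal.le_radical (Ideal.subset_span (Set.mem_range_self j))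
    exact this
  haveI hprime : (RingHom.ker ψ.toRingHom).IsPrime := RingHom.ker_isPrime _
  apply le_antisymm
  · -- ker ψ ⊆ radical
    intro G hG
    have hG0 : ψ G = 0 := hG
    rw [hψ] at hG0
    obtain ⟨H, hH0, hHbar⟩ := Stmt9Aux.key d hd a b hai hbi G hG0
    have hHker : H ∈ RingHom.ker φ.toRingHom := by
      show φ H = 0
      rw [hφ]; exact hH0
    rw [hrad] at hHker
    obtain ⟨r, hr⟩ := hHker
    refine ⟨r, ?_⟩
    have hmap : bar (H ^ r) ∈ Ideal.map bar (Ideal.span (Set.range F)) :=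
      Ideal.mem_map_of_mem bar hr
    rw [Ideal.map_span, ← Set.range_comp] at hmap
    have hbarH : bar H = G := by rw [hbar]; exact hHbar
    rw [map_pow, hbarH] at hmap
    exact hmap
  · -- radical ⊆ ker ψ
    rw [hprime.radical_le_iff, Ideal.span_le]
    rintro _ ⟨j, rfl⟩
    show ψ (bar (F j)) = 0
    have := congrArg (fun f : MvPolynomial (Fin n ⊕ Fin 2) K →ₐ[K]
        MvPolynomial {k : Fin n // k ≠ i} K => f (F j)) hcomp
    simp only [AlgHom.comp_apply] at this
    rw [this, hkerφ j, map_zero]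
end

section
/- Let p, q be distinct primes and d_1, a_1, c, b_2, b_3 positive integers with gcd(d_1, a_1) = 1, p ∤ d_1c, q ∤ b_2, p ∤ b_3 and q ∤ b_3. Let T_1 = {(d_1,0,0), (0,q,0), (0,0,pq), (a_1,0,cq)} and T_2 = {(0,b_2,b_3)} in ℤ^3. Then ℤT_1 ∩ ℤT_2 = ℤ·q·(0,b_2,b_3), and pq·(0,b_2,b_3) = b_2p·(0,q,0) + b_3·(0,0,pq) ∈ ℕT_1 ∩ ℕT_2. -/
/-- For T₁ = {(d₁,0,0),(0,q,0),(0,0,pq),(a₁,0,cq)} and T₂ = {(0,b₂,b₃)} in ℤ³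
(p ≠ q primes, gcd(d₁,a₁)=1, p ∤ d₁, p ∤ c, q ∤ b₂, p ∤ b₃, q ∤ b₃):
ℤT₁ ∩ ℤT₂ = ℤ·q·(0,b₂,b₃), and
pq·(0,b₂,b₃) = b₂p·(0,q,0) + b₃·(0,0,pq) ∈ ℕT₁ ∩ ℕT₂. -/
theorem stmt_16 (p q : ℕ) (hp : p.Prime) (hq : q.Prime) (hpq : p ≠ q)
    (d1 a1 c b2 b3 : ℕ) (hd1 : 0 < d1) (ha1 : 0 < a1) (hc : 0 < c)
    (hb2 : 0 < b2) (hb3 : 0 < b3)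
    (h1 : Nat.gcd d1 a1 = 1) (h2 : ¬ p ∣ d1) (h3 : ¬ p ∣ c)
    (h4 : ¬ q ∣ b2) (h5 : ¬ p ∣ b3) (h6 : ¬ q ∣ b3) :
    (AddSubgroup.closure ({((d1 : ℤ), 0, 0), (0, (q : ℤ), 0), (0, 0, (p : ℤ) * q),
        ((a1 : ℤ), 0, (c : ℤ) * q)} : Set (ℤ × ℤ × ℤ)) ⊓
      AddSubgroup.closure ({(0, (b2 : ℤ), (b3 : ℤ))} : Set (ℤ × ℤ × ℤ)) =
      AddSubgroup.closure
        ({(q : ℤ) • ((0 : ℤ), (b2 : ℤ), (b3 : ℤ))} : Set (ℤ × ℤ × ℤ))) ∧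
    ((p : ℤ) * q) • ((0 : ℤ), (b2 : ℤ), (b3 : ℤ)) =
      ((b2 : ℤ) * p) • ((0 : ℤ), (q : ℤ), (0 : ℤ)) +
        (b3 : ℤ) • ((0 : ℤ), (0 : ℤ), (p : ℤ) * q) ∧
    ((p : ℤ) * q) • ((0 : ℤ), (b2 : ℤ), (b3 : ℤ)) ∈
      AddSubmonoid.closure ({((d1 : ℤ), 0, 0), (0, (q : ℤ), 0), (0, 0, (p : ℤ) * q),
          ((a1 : ℤ), 0, (c : ℤ) * q)} : Set (ℤ × ℤ × ℤ)) ⊓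
        AddSubmonoid.closure ({(0, (b2 : ℤ), (b3 : ℤ))} : Set (ℤ × ℤ × ℤ)) := by
  set v : ℤ × ℤ × ℤ := (0, (b2 : ℤ), (b3 : ℤ)) with hv
  set g1 : ℤ × ℤ × ℤ := ((d1 : ℤ), 0, 0) with hg1
  set g2 : ℤ × ℤ × ℤ := (0, (q : ℤ), 0) with hg2
  set g3 : ℤ × ℤ × ℤ := (0, 0, (p : ℤ) * q) with hg3
  set g4 : ℤ × ℤ × ℤ := ((a1 : ℤ), 0, (c : ℤ) * q) with hg4
  set T1 : Set (ℤ × ℤ × ℤ) := {g1, g2, g3, g4} with hT1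
  -- coprimality of p and d1*c
  have hcop : IsCoprime (p : ℤ) ((d1 : ℤ) * c) := by
    have hpd : ¬ (p : ℤ) ∣ (d1 : ℤ) * c := by
      rw [← Nat.cast_mul, Int.natCast_dvd_natCast]
      intro h
      rcases (Nat.Prime.dvd_mul hp).mp h with h' | h' <;> [exact h2 h'; exact h3 h']
    have hnc : Nat.Coprime p (d1 * c) := (Nat.Prime.coprime_iff_not_dvd hp).mpr
      (fun h => hpd (by exact_mod_cast Int.natCast_dvd_natCast.mpr h))
    exact_mod_cast Nat.isCoprime_iff_coprime.mpr hnc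
  obtain ⟨u, w, huw⟩ := hcop
  -- q • v ∈ closure T1
  have hqv1 : (q : ℤ) • v ∈ AddSubgroup.closure T1 := by
    have key : (q : ℤ) • v = (-(w * b3 * a1)) • g1 + (b2 : ℤ) • g2 + (u * b3) • g3
        + (w * b3 * d1) • g4 := by
      simp only [hv, hg1, hg2, hg3, hg4, Prod.smul_mk, Prod.mk_add_mk, Prod.mk.injEq,
        smul_eq_mul]
      refine ⟨by ring, by ring, ?_⟩
      have : (u * p + w * ((d1 : ℤ) * c)) * b3 = b3 := by rw [huw]; ring
      nlinarith [this]
    rw [key]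
    refine add_mem (add_mem (add_mem ?_ ?_) ?_) ?_ <;>
      exact AddSubgroup.zsmul_mem _ (AddSubgroup.subset_closure (by simp [hT1])) _
  -- all elements of closure T1 have q ∣ second coordinate
  have hdiv : ∀ x ∈ AddSubgroup.closure T1, (q : ℤ) ∣ x.2.1 := by
    intro x hx
    let f : ℤ × ℤ × ℤ →+ ℤ := (AddMonoidHom.fst ℤ ℤ).comp (AddMonoidHom.snd ℤ (ℤ × ℤ))
    have : AddSubgroup.closure T1 ≤ (AddSubgroup.zmultiples (q : ℤ)).comap f := by
      rw [AddSubgroup.closure_le]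
      intro y hy
      simp only [hT1, Set.mem_insert_iff, Set.mem_singleton_iff] at hy
      rcases hy with rfl | rfl | rfl | rfl <;>
        · simp only [AddSubgroup.mem_comap, f, hg1, hg2, hg3, hg4, AddMonoidHom.coe_comp,
            Function.comp_apply, AddMonoidHom.coe_snd, AddMonoidHom.coe_fst,
            Int.mem_zmultiples_iff]
          first
          | exact zero_mem _
          | simp [Int.mem_zmultiples_iff]
    have := this hx
    simp only [AddSubgroup.mem_comap, f, AddMonoidHom.coe_comp, Function.comp_apply,
      AddMonoidHom.coe_snd, AddMonoidHom.coe_fst] at this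
    rw [Int.mem_zmultiples_iff] at this
    exact this
  refine ⟨?_, ?_, ?_⟩
  · apply le_antisymm
    · intro x hx
      obtain ⟨hx1, hx2⟩ := AddSubgroup.mem_inf.mp hx
      rw [AddSubgroup.mem_closure_singleton] at hx2
      obtain ⟨n, hn⟩ := hx2
      have hq2 : (q : ℤ) ∣ x.2.1 := hdiv x hx1
      have hx21 : x.2.1 = n * b2 := by rw [← hn]; simp [hv]
      have : (q : ℤ) ∣ n := by
        rw [hx21] at hq2
        rcases (Int.Prime.dvd_mul' hq hq2) with h | h
        · exact h
        · exact absurd (Int.natCast_dvd_natCast.mp h) h4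
      obtain ⟨m, rfl⟩ := this
      rw [AddSubgroup.mem_closure_singleton]
      exact ⟨m, by rw [← hn, smul_smul, mul_comm]⟩
    · rw [AddSubgroup.closure_le]
      rintro x hx
      rw [Set.mem_singleton_iff] at hx
      subst hx
      refine AddSubgroup.mem_inf.mpr ⟨hqv1, ?_⟩
      exact AddSubgroup.mem_closure_singleton.mpr ⟨q, rfl⟩
  · simp only [hv, Prod.smul_mk, Prod.mk_add_mk, Prod.mk.injEq, smul_eq_mul]
    simp only [hg2, hg3, Prod.smul_mk, Prod.mk_add_mk, Prod.mk.injEq, smul_eq_mul]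
    refine ⟨by ring, by ring, by ring⟩
  · refine AddSubmonoid.mem_inf.mpr ⟨?_, ?_⟩
    · have key : ((p : ℤ) * q) • v = (b2 * p : ℕ) • g2 + (b3 : ℕ) • g3 := by
        rw [← natCast_zsmul g2 (b2 * p), ← natCast_zsmul g3 b3]
        simp only [hv, hg2, hg3, Prod.smul_mk, Prod.mk_add_mk, Prod.mk.injEq, smul_eq_mul]
        push_cast
        refine ⟨by ring, by ring, by ring⟩
      rw [key]
      refine add_mem ?_ ?_ <;>
        · apply AddSubmonoid.nsmul_mem
          exact AddSubmonoid.subset_closure (by simp [hT1])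
    · have key : ((p : ℤ) * q) • v = (p * q : ℕ) • v := by
        rw [← natCast_zsmul v (p * q)]
        push_cast
        ring_nf
      rw [key]
      apply AddSubmonoid.nsmul_mem
      exact AddSubmonoid.subset_closure (Set.mem_singleton _)
end

section
/- Let p be a prime, r a nonnegative integer, and a_1,...,a_n, b_1,...,b_n nonnegative integers. In the polynomial ring K[x_1,...,x_n,y_1,y_2] over a field K, the binomials F_1 = y_1^{p^r} − x_1^{a_1}···x_n^{a_n} and F_2 = y_2^{p^r} − x_1^{b_1}···x_n^{b_n} lie in the toric ideal of the parametrization x_i = u_i^{p^r}, y_1 = ∏ u_i^{a_i}, y_2 = ∏ u_i^{b_i}. Moreover, if char K = p, then every point of K^{n+2} where F_1 and F_2 vanish lies on the variety V parametrized as above (K algebraically closed), i.e., V = V(F_1, F_2) set-theoretically. -/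
open MvPolynomial in
/-- F₁ = y₁^{p^r} − ∏ x_i^{a_i} and F₂ = y₂^{p^r} − ∏ x_i^{b_i} lie in the toric ideal
of x_i = u_i^{p^r}, y₁ = ∏ u_i^{a_i}, y₂ = ∏ u_i^{b_i}; moreover, over an algebraically
closed field of characteristic p, the parametrized variety V equals the common zero set
of F₁ and F₂ in K^{n+2}.  (Sum.inl i = x_i, Sum.inr 0 = y₁, Sum.inr 1 = y₂.) -/
theorem stmt_19 (K : Type*) [Field K] [IsAlgClosed K] (p : ℕ) (hp : p.Prime)
    [CharP K p] (r n : ℕ) (a b : Fin n → ℕ)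
    (φ : MvPolynomial (Fin n ⊕ Fin 2) K →ₐ[K] MvPolynomial (Fin n) K)
    (hφ : φ = aeval (Sum.elim (fun i => X i ^ p ^ r)
      (fun j => if j = 0 then ∏ i, X i ^ a i else ∏ i, X i ^ b i))) :
    (X (Sum.inr 0) ^ p ^ r - ∏ i, X (Sum.inl i) ^ a i ∈ RingHom.ker φ.toRingHom) ∧
    (X (Sum.inr 1) ^ p ^ r - ∏ i, X (Sum.inl i) ^ b i ∈ RingHom.ker φ.toRingHom) ∧
    ({v : (Fin n → K) × K × K | ∃ u : Fin n → K,
        v = (fun i => u i ^ p ^ r, ∏ i, u i ^ a i, ∏ i, u i ^ b i)} =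
      {v : (Fin n → K) × K × K |
        v.2.1 ^ p ^ r = ∏ i, v.1 i ^ a i ∧ v.2.2 ^ p ^ r = ∏ i, v.1 i ^ b i}) := by
  have hpr : 0 < p ^ r := pow_pos hp.pos r
  have hinj : ∀ x y : K, x ^ p ^ r = y ^ p ^ r → x = y := by
    intro x y h
    haveI := Fact.mk hp
    have hz : (x - y) ^ p ^ r = 0 := by
      rw [sub_pow_char_pow, h, sub_self]
    exact sub_eq_zero.mp (pow_eq_zero_iff hpr.ne' |>.mp hz)
  refine ⟨?_, ?_, ?_⟩
  · rw [RingHom.mem_ker]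
    simp [hφ, ← Finset.prod_pow, ← pow_mul, mul_comm (p ^ r)]
  · rw [RingHom.mem_ker]
    simp [hφ, ← Finset.prod_pow, ← pow_mul, mul_comm (p ^ r)]
  · ext ⟨x, y1, y2⟩
    simp only [Set.mem_setOf_eq]
    constructor
    · rintro ⟨u, h⟩
      obtain ⟨h1, h2, h3⟩ : x = (fun i => u i ^ p ^ r) ∧ y1 = ∏ i, u i ^ a i ∧
          y2 = ∏ i, u i ^ b i := by
        simpa [Prod.ext_iff] using h
      subst h1 h2 h3
      constructor <;> · rw [← Finset.prod_pow]
                        simp [← pow_mul, mul_comm (p ^ r)]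
    · rintro ⟨h1, h2⟩
      choose u hu using fun i => IsAlgClosed.exists_pow_nat_eq (x i) hpr
      refine ⟨u, ?_⟩
      have hx : x = fun i => u i ^ p ^ r := by funext i; exact (hu i).symm
      subst hx
      have e1 : y1 = ∏ i, u i ^ a i := by
        apply hinj
        rw [h1, ← Finset.prod_pow]
        exact Finset.prod_congr rfl fun i _ => by rw [← pow_mul, ← pow_mul, mul_comm]
      have e2 : y2 = ∏ i, u i ^ b i := by
        apply hinj
        rw [h2, ← Finset.prod_pow]
        exact Finset.prod_congr rfl fun i _ => by rw [← pow_mul, ← pow_mul, mul_comm]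
      rw [e1, e2]
end
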